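/- arXiv:1301.2080 — 5 statements merged into one kernel-verified Lean document; each statement's English description precedes it below -/
import Mathlib

section
/- Let G be a finite group and ρ : G → GL(V) a faithful representation on a finite-dimensional real vector space V, identified with a subgroup of invertible matrices in End(V). Then the set of vertices (extreme points) of the representation polytope P(ρ) = conv(ρ(g) : g ∈ G) ⊆ End(V) is exactly the set ρ(G). -/
/-!
Summing the squared coordinates of `ρ(g) A` over `g ∈ G` gives the squared Frobenius norm of
`A` for a `G`-invariant inner product on `V`, so left multiplication by `ρ(g)` is an isometry of
`End(V)` and all `ρ(g) = ρ(g) · 1` lie on one sphere. In a strictly convex space a point of a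
sphere is an extreme point of any subset of the closed ball that contains it.
-/

open Set Metric

theorem mem_extremePoints_of_map_mem_extremePoints {𝕜 E F : Type*} [Ring 𝕜]
    [PartialOrder 𝕜] [IsOrderedRing 𝕜] [AddCommGroup E] [Module 𝕜 E] [AddCommGroup F]
    [Module 𝕜 F] {f : E →ₗ[𝕜] F} (hf : Function.Injective f) {A : Set E} {x : E}
    (hx : x ∈ A)
    (hfx : f x ∈ extremePoints 𝕜 (f '' A)) : x ∈ extremePoints 𝕜 A := by
  refine ⟨hx, fun x₁ hx₁ x₂ hx₂ hseg => ?_⟩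
  have hfseg : f x ∈ openSegment 𝕜 (f x₁) (f x₂) :=
    image_openSegment 𝕜 f.toAffineMap x₁ x₂ ▸ mem_image_of_mem f hseg
  exact hf (hfx.2 (mem_image_of_mem f hx₁) (mem_image_of_mem f hx₂) hfseg)

theorem mem_extremePoints_of_mem_sphere_of_subset_closedBall {E : Type*} [NormedAddCommGroup E]
    [NormedSpace ℝ E] [StrictConvexSpace ℝ E] {A : Set E} {c x : E} {r : ℝ}
    (hA : A ⊆ closedBall c r) (hx : x ∈ A) (hxr : x ∈ sphere c r) :
    x ∈ extremePoints ℝ A := by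
  refine ⟨hx, fun x₁ hx₁ x₂ hx₂ hseg => ?_⟩
  obtain rfl | hne := eq_or_ne x₁ x₂
  · rw [openSegment_same, mem_singleton_iff] at hseg
    exact hseg.symm
  · have := openSegment_subset_ball_of_ne (hA hx₁) (hA hx₂) hne hseg
    exact absurd (mem_sphere.mp hxr) (mem_ball.mp this).ne

theorem extremePoints_convexHull_eq_of_mapsTo_sphere {E F : Type*} [AddCommGroup E]
    [Module ℝ E] [NormedAddCommGroup F] [NormedSpace ℝ F] [StrictConvexSpace ℝ F]
    {f : E →ₗ[ℝ] F} (hf : Function.Injective f) {S : Set E} {c : F} {r : ℝ}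
    (hS : MapsTo f S (sphere c r)) : extremePoints ℝ (convexHull ℝ S) = S := by
  refine extremePoints_convexHull_subset.antisymm fun s hs => ?_
  refine mem_extremePoints_of_map_mem_extremePoints hf (subset_convexHull ℝ S hs) ?_
  rw [f.image_convexHull]
  refine mem_extremePoints_of_mem_sphere_of_subset_closedBall ?_
    (subset_convexHull ℝ _ ⟨s, hs, rfl⟩) (hS hs)
  exact convexHull_min (hS.image_subset.trans sphere_subset_closedBall) (convex_closedBall c r)

namespace Representation

variable {G : Type*} [Group G] {V : Type*} [AddCommGroup V] [Module ℝ V] {ι : Type*}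
  (ρ : Representation ℝ G V) (b : Module.Basis ι ℝ V)

noncomputable def frobeniusEmbedding :
    Module.End ℝ V →ₗ[ℝ] EuclideanSpace ℝ (G × ι × ι) where
  toFun A := WithLp.toLp 2 fun x => b.repr (ρ x.1 (A (b x.2.1))) x.2.2
  map_add' A B := by ext; simp
  map_smul' a A := by ext; simp

theorem frobeniusEmbedding_injective : Function.Injective (frobeniusEmbedding ρ b) := by
  intro A B hAB
  refine b.ext fun i => b.repr.injective <| Finsupp.ext fun j => ?_
  simpa [frobeniusEmbedding] using congr($hAB (1, i, j))

theorem norm_frobeniusEmbedding_mul [Fintype G] [Fintype ι] (g : G) (A : Module.End ℝ V) :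
    ‖frobeniusEmbedding ρ b (ρ g * A)‖ = ‖frobeniusEmbedding ρ b A‖ := by
  rw [← sq_eq_sq₀ (norm_nonneg _) (norm_nonneg _), EuclideanSpace.norm_sq_eq,
    EuclideanSpace.norm_sq_eq]
  exact Fintype.sum_equiv ((Equiv.mulRight g).prodCongr (.refl _)) _ _
    fun x => by simp [frobeniusEmbedding, map_mul]

end Representation

theorem vertices_of_representation_polytope_general
    {G : Type} [Group G] [Fintype G]
    {V : Type} [AddCommGroup V] [Module ℝ V] [FiniteDimensional ℝ V]
    (ρ : Representation ℝ G V) :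
    Set.extremePoints ℝ (convexHull ℝ (Set.range fun g : G => (ρ g : V →ₗ[ℝ] V)))
      = Set.range fun g : G => (ρ g : V →ₗ[ℝ] V) := by
  let b := Module.finBasis ℝ V
  refine extremePoints_convexHull_eq_of_mapsTo_sphere (c := 0)
    (r := ‖ρ.frobeniusEmbedding b 1‖) (ρ.frobeniusEmbedding_injective b) ?_
  rintro _ ⟨g, rfl⟩
  simpa using ρ.norm_frobeniusEmbedding_mul b g 1

/-- For a finite group `G` and a faithful real representation
`ρ : G → GL(V)` on a finite-dimensional real vector space `V` (identified with a
subgroup of the invertible elements of `End(V)`), the set of vertices (extreme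
points) of the representation polytope `P(ρ) = conv(ρ(g) : g ∈ G) ⊆ End(V)` is
exactly `ρ(G)`. -/
theorem vertices_of_representation_polytope
    {G : Type} [Group G] [Fintype G]
    {V : Type} [AddCommGroup V] [Module ℝ V] [FiniteDimensional ℝ V]
    (ρ : Representation ℝ G V) (hρ : Function.Injective ρ) :
    Set.extremePoints ℝ (convexHull ℝ (Set.range fun g : G => (ρ g : V →ₗ[ℝ] V)))
      = Set.range fun g : G => (ρ g : V →ₗ[ℝ] V) :=
  vertices_of_representation_polytope_general ρ
end

section
/- Two real representations ρ₁ and ρ₂ of a finite group G are stably equivalent if and only if they contain the same non-trivial irreducible factors, i.e. Irr_ℝ(ρ₁) \ {1_G} = Irr_ℝ(ρ₂) \ {1_G}. -/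
open Finset

variable {G : Type} [Group G] [Fintype G]

/-- The affine kernel `ker°ρ` of a real representation `ρ` of `G`:
families `(λ_g)` with `∑ λ_g ρ(g) = 0` and `∑ λ_g = 0`. -/
def affKer {V : Type} [AddCommGroup V] [Module ℝ V]
    (ρ : Representation ℝ G V) : Set (G → ℝ) :=
  {l | (∑ g : G, l g • (ρ g : V →ₗ[ℝ] V)) = 0 ∧ (∑ g : G, l g) = 0}

/-- Direct sum (realized on the product space) of two representations. -/
def prodRep {V W : Type} [AddCommGroup V] [Module ℝ V] [AddCommGroup W] [Module ℝ W]
    (ρ : Representation ℝ G V) (σ : Representation ℝ G W) :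
    Representation ℝ G (V × W) where
  toFun g := (ρ g).prodMap (σ g)
  map_one' := by ext <;> simp
  map_mul' g h := by ext <;> simp

/-- Isomorphism of `G`-representations. -/
def RepIso {V W : Type} [AddCommGroup V] [Module ℝ V] [AddCommGroup W] [Module ℝ W]
    (ρ : Representation ℝ G V) (σ : Representation ℝ G W) : Prop :=
  ∃ e : V ≃ₗ[ℝ] W, ∀ (g : G) (v : V), e (ρ g v) = σ g (e v)

/-- Two real representations `ρ₁`, `ρ₂` of `G` are stably equivalent if there are
affine quotients `ρ₁'` of `ρ₁` and `ρ₂'` of `ρ₂` (i.e. `ker°ρᵢ ⊆ ker°ρᵢ'`) with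
`ρ₁ ⊕ ρ₁' ≅ ρ₂ ⊕ ρ₂'` as `G`-representations. -/
def StablyEquivalent {V W : Type} [AddCommGroup V] [Module ℝ V] [AddCommGroup W] [Module ℝ W]
    (ρ₁ : Representation ℝ G V) (ρ₂ : Representation ℝ G W) : Prop :=
  ∃ (V' : Type) (_ : AddCommGroup V') (_ : Module ℝ V') (ρ₁' : Representation ℝ G V')
    (W' : Type) (_ : AddCommGroup W') (_ : Module ℝ W') (ρ₂' : Representation ℝ G W'),
    affKer ρ₁ ⊆ affKer ρ₁' ∧ affKer ρ₂ ⊆ affKer ρ₂' ∧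
    RepIso (prodRep ρ₁ ρ₁') (prodRep ρ₂ ρ₂')

/-- `θ` occurs as a direct summand (irreducible factor, when `θ` is irreducible)
of `ρ`: there are equivariant maps `i : W → V` and `p : V → W` with `p ∘ i = id`. -/
def IsSummand {V W : Type} [AddCommGroup V] [Module ℝ V] [AddCommGroup W] [Module ℝ W]
    (θ : Representation ℝ G W) (ρ : Representation ℝ G V) : Prop :=
  ∃ (i : W →ₗ[ℝ] V) (p : V →ₗ[ℝ] W),
    (∀ (g : G) (w : W), i (θ g w) = ρ g (i w)) ∧
    (∀ (g : G) (v : V), p (ρ g v) = θ g (p v)) ∧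
    p ∘ₗ i = LinearMap.id

/-- A representation is irreducible: the space is nonzero and has no proper nonzero
`G`-invariant subspace. -/
def IsIrreducibleRep {W : Type} [AddCommGroup W] [Module ℝ W]
    (θ : Representation ℝ G W) : Prop :=
  (∃ w : W, w ≠ 0) ∧
  ∀ U : Submodule ℝ W, (∀ g : G, ∀ x ∈ U, θ g x ∈ U) → U = ⊥ ∨ U = ⊤

/-!
Everything is read off annihilators in `ℝ[G]`. By Maschke's theorem `ℝ[G]` is semisimple, so an
irreducible `θ` is a summand of `ρ` iff `ann ρ ≤ ann θ`, while `ker°ρ` corresponds to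
`ann ρ ⊓ ann 1_G`. If `ρ₁ ⊕ ρ₁' ≅ ρ₂ ⊕ ρ₂'` with `ρ₂'` an affine quotient of `ρ₂`, and `θ ≠ 1_G` is
a factor of `ρ₁`, then `ann ρ₂ ⊓ ann 1_G ≤ ann ρ₂ ⊓ ann ρ₂' ≤ ann ρ₁ ≤ ann θ`. The annihilator of a
simple module is prime and `ann 1_G ≰ ann θ`, so `ann ρ₂ ≤ ann θ`. Conversely, if the non-trivial
factors agree then `ρ₁ ⊕ ρ₂ ≅ ρ₂ ⊕ ρ₁` is a witness: `ann ρ₁ ⊓ ann 1_G` kills every simple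
constituent of `ρ₂`, trivial or not, hence kills `ρ₂`.
-/

section SimpleModule

variable {R S M : Type*} [Ring R] [AddCommGroup S] [Module R S] [AddCommGroup M] [Module R M]

theorem IsSimpleModule.le_annihilator_or_le_annihilator_of_inf_le [IsSimpleModule R S]
    {I J : Ideal R} [J.IsTwoSided] (h : I ⊓ J ≤ Module.annihilator R S) :
    I ≤ Module.annihilator R S ∨ J ≤ Module.annihilator R S := by
  refine or_iff_not_imp_left.mpr fun hI b hb => Module.mem_annihilator.mpr fun t => ?_
  obtain ⟨a, ha, has⟩ := Set.not_subset.mp hI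
  obtain ⟨s, hs⟩ : ∃ s : S, a • s ≠ 0 := by simpa [Module.mem_annihilator] using has
  obtain ⟨c, rfl⟩ : ∃ c : R, c • a • s = t := Submodule.mem_span_singleton.mp
    ((IsSimpleModule.span_singleton_eq_top R hs).symm ▸ Submodule.mem_top)
  have hbca : b * c * a ∈ I ⊓ J := ⟨I.mul_mem_left _ ha,
    Ideal.IsTwoSided.mul_mem_of_left _ (Ideal.IsTwoSided.mul_mem_of_left _ hb)⟩
  rw [smul_smul, smul_smul]
  exact Module.mem_annihilator.mp (h hbca) s

theorem IsSimpleModule.exists_linearMap_ne_zero_of_annihilator_le [IsSemisimpleRing R]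
    [IsSimpleModule R S] (h : Module.annihilator R M ≤ Module.annihilator R S) :
    ∃ f : S →ₗ[R] M, f ≠ 0 := by
  have := IsSimpleModule.nontrivial R S
  obtain ⟨s, hs⟩ := exists_ne (0 : S)
  -- `σ` splits `r ↦ r • s`, i.e. `σ t • s = t`
  obtain ⟨σ, hσ⟩ := IsSemisimpleModule.lifting_property (LinearMap.toSpanSingleton R S s)
    (IsSimpleModule.toSpanSingleton_surjective R hs) LinearMap.id
  have hσs : σ s • s = s := LinearMap.congr_fun hσ s
  obtain ⟨v, hv⟩ : ∃ v : M, σ s • v ≠ 0 := by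
    by_contra! hv
    exact hs (hσs ▸ Module.mem_annihilator.mp (h (Module.mem_annihilator.mpr hv)) s)
  exact ⟨LinearMap.toSpanSingleton R M v ∘ₗ σ, fun h0 => hv (LinearMap.congr_fun h0 s)⟩

theorem IsSimpleModule.exists_retraction_iff_annihilator_le [IsSemisimpleRing R]
    [IsSimpleModule R S] :
    (∃ (i : S →ₗ[R] M) (p : M →ₗ[R] S), p ∘ₗ i = LinearMap.id) ↔
      Module.annihilator R M ≤ Module.annihilator R S := by
  constructor
  · rintro ⟨i, p, hpi⟩
    exact i.annihilator_le_of_injective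
      (Function.LeftInverse.injective (g := p) (LinearMap.congr_fun hpi))
  · intro h
    obtain ⟨f, hf⟩ := exists_linearMap_ne_zero_of_annihilator_le h
    obtain ⟨p, hp⟩ := IsSemisimpleModule.extension_property f
      (LinearMap.injective_of_ne_zero hf) LinearMap.id
    exact ⟨f, p, hp⟩

theorem IsSemisimpleModule.le_annihilator_of_forall_isSimpleModule [IsSemisimpleModule R M]
    {I : Ideal R} (h : ∀ m : Submodule R M, IsSimpleModule R m → I ≤ Module.annihilator R m) :
    I ≤ Module.annihilator R M := by
  rw [← Submodule.annihilator_top, ← sSup_simples_eq_top, sSup_eq_iSup',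
    Submodule.annihilator_iSup]
  exact le_iInf fun m => h m m.2

end SimpleModule

open scoped MonoidAlgebra

namespace Representation

section

variable {k G V W : Type*} [CommSemiring k] [Monoid G] [AddCommMonoid V] [Module k V]
  [AddCommMonoid W] [Module k W] (ρ : Representation k G V) (σ : Representation k G W)

theorem mem_annihilator_asModule_iff {a : k[G]} :
    a ∈ Module.annihilator k[G] ρ.asModule ↔ ρ.asAlgebraHom a = 0 := by
  rw [Module.mem_annihilator, LinearMap.ext_iff]
  rfl

theorem asAlgebraHom_eq_sum [Fintype G] (a : k[G]) : ρ.asAlgebraHom a = ∑ g, a.coeff g • ρ g :=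
  (MonoidAlgebra.lift_apply _ _).trans (Finsupp.sum_fintype _ _ fun _ => zero_smul _ _)

theorem asAlgebraHom_prod (a : k[G]) :
    (ρ.prod σ).asAlgebraHom a = (ρ.asAlgebraHom a).prodMap (σ.asAlgebraHom a) := by
  induction a using MonoidAlgebra.induction_linear with
  | zero => ext <;> simp
  | add x y hx hy => ext <;> simp_all
  | single g r => ext <;> simp

theorem annihilator_asModule_prod :
    Module.annihilator k[G] (ρ.prod σ).asModule =
      Module.annihilator k[G] ρ.asModule ⊓ Module.annihilator k[G] σ.asModule := by
  ext a
  simp only [mem_annihilator_asModule_iff, asAlgebraHom_prod, Ideal.mem_inf]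
  refine ⟨fun h => ⟨?_, ?_⟩, fun ⟨h₁, h₂⟩ => by rw [h₁, h₂, LinearMap.prodMap_zero]⟩
  · ext v
    exact congr_arg Prod.fst (LinearMap.congr_fun h (v, 0))
  · ext w
    exact congr_arg Prod.snd (LinearMap.congr_fun h (0, w))

theorem asAlgebraHom_ofModule'_apply {M : Type*} [AddCommMonoid M] [Module k M] [Module k[G] M]
    [IsScalarTower k k[G] M] (a : k[G]) (m : M) : (ofModule' M).asAlgebraHom a m = a • m := by
  simp [ofModule', asAlgebraHom]

noncomputable def ofModule'AsModuleEquiv (M : Type*) [AddCommMonoid M] [Module k M]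
    [Module k[G] M] [IsScalarTower k k[G] M] :
    (ofModule' (k := k) (G := G) M).asModule ≃ₗ[k[G]] M where
  toFun m := m
  invFun m := m
  map_add' _ _ := rfl
  map_smul' a m := asAlgebraHom_ofModule'_apply (M := M) a m
  left_inv _ := rfl
  right_inv _ := rfl

end

theorem annihilator_trivial_le_iff {k G W : Type*} [CommRing k] [Group G] [Fintype G]
    [AddCommGroup W] [Module k W] (θ : Representation k G W) :
    Module.annihilator k[G] (trivial k G k).asModule ≤ Module.annihilator k[G] θ.asModule ↔
      ∀ g, θ g = LinearMap.id := by
  constructor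
  · intro h g
    have hmem :
        MonoidAlgebra.single g 1 - 1 ∈ Module.annihilator k[G] (trivial k G k).asModule := by
      simp [mem_annihilator_asModule_iff, Module.End.one_eq_id]
    simpa [sub_eq_zero, Module.End.one_eq_id] using (mem_annihilator_asModule_iff θ).mp (h hmem)
  · intro h a ha
    rw [mem_annihilator_asModule_iff, asAlgebraHom_eq_sum] at ha ⊢
    have hsum : ∑ g, a.coeff g = 0 := by
      simpa [← Finset.sum_smul] using LinearMap.congr_fun ha 1
    simp [h, ← Finset.sum_smul, hsum]

end Representation

open Representation

local notation "ann " ρ:max => Module.annihilator ℝ[G] (Representation.asModule ρ)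

section Annihilator

variable {V W : Type} [AddCommGroup V] [Module ℝ V] [AddCommGroup W] [Module ℝ W]

omit [Fintype G] in
theorem isSummand_iff_exists_retraction (θ : Representation ℝ G W) (ρ : Representation ℝ G V) :
    IsSummand θ ρ ↔ ∃ (i : θ.asModule →ₗ[ℝ[G]] ρ.asModule) (p : ρ.asModule →ₗ[ℝ[G]] θ.asModule),
      p ∘ₗ i = LinearMap.id := by
  constructor
  · rintro ⟨i, p, hi, hp, hpi⟩
    exact ⟨IntertwiningMap.equivLinearMapAsModule θ ρ
        (i.intertwiningMap_of_isIntertwiningMap θ ρ hi),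
      IntertwiningMap.equivLinearMapAsModule ρ θ (p.intertwiningMap_of_isIntertwiningMap ρ θ hp),
      LinearMap.ext fun w => LinearMap.congr_fun hpi w⟩
  · rintro ⟨i, p, hpi⟩
    let i' := (IntertwiningMap.equivLinearMapAsModule θ ρ).symm i
    let p' := (IntertwiningMap.equivLinearMapAsModule ρ θ).symm p
    exact ⟨i'.toLinearMap, p'.toLinearMap, i'.isIntertwining, p'.isIntertwining,
      LinearMap.ext fun w => LinearMap.congr_fun hpi w⟩

omit [Fintype G] in
theorem isIrreducibleRep_iff_isSimpleModule (θ : Representation ℝ G W) :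
    IsIrreducibleRep θ ↔ IsSimpleModule ℝ[G] θ.asModule := by
  rw [← irreducible_iff_isSimpleModule_asModule, Representation.IsIrreducible, isSimpleOrder_iff]
  refine and_congr ?_ ⟨fun h σ => ?_, fun h U hU => ?_⟩
  · constructor
    · rintro ⟨w, hw⟩
      refine nontrivial_of_ne ⊥ ⊤ fun h => hw ?_
      have hw' : w ∈ (⊤ : Subrepresentation θ).toSubmodule := Submodule.mem_top
      rw [← h] at hw'
      exact (Submodule.mem_bot ℝ).mp hw'
    · intro
      obtain ⟨σ, hσ⟩ := exists_ne (⊥ : Subrepresentation θ)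
      obtain ⟨w, -, hw⟩ := Submodule.exists_mem_ne_zero_of_ne_bot
        fun h => hσ (Subrepresentation.ext h)
      exact ⟨w, hw⟩
  · exact (h σ.toSubmodule σ.apply_mem_toSubmodule).imp Subrepresentation.ext Subrepresentation.ext
  · exact (h ⟨U, hU⟩).imp (congr_arg Subrepresentation.toSubmodule)
      (congr_arg Subrepresentation.toSubmodule)

omit [Fintype G] in
theorem RepIso.symm {ρ : Representation ℝ G V} {σ : Representation ℝ G W} (h : RepIso ρ σ) :
    RepIso σ ρ := by
  obtain ⟨e, he⟩ := h
  exact ⟨e.symm, fun g w => e.injective (by rw [he, e.apply_symm_apply, e.apply_symm_apply])⟩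

omit [Fintype G] in
theorem RepIso.annihilator_eq {ρ : Representation ℝ G V} {σ : Representation ℝ G W}
    (h : RepIso ρ σ) : ann ρ = ann σ := by
  obtain ⟨e, he⟩ := h
  let f := IntertwiningMap.equivLinearMapAsModule ρ σ
    (e.toLinearMap.intertwiningMap_of_isIntertwiningMap ρ σ he)
  exact le_antisymm (f.annihilator_le_of_surjective e.surjective)
    (f.annihilator_le_of_injective e.injective)

theorem affKer_eq_preimage (ρ : Representation ℝ G V) :
    affKer ρ = (Finsupp.equivFunOnFinite.symm.trans MonoidAlgebra.coeffEquiv.symm) ⁻¹'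
      ((ann ρ ⊓ ann (trivial ℝ G ℝ) : Ideal ℝ[G]) : Set ℝ[G]) := by
  ext l
  simp [affKer, mem_annihilator_asModule_iff, asAlgebraHom_eq_sum, ← Finset.sum_smul,
    ← Module.End.one_eq_id, and_comm]

theorem affKer_subset_affKer_iff (ρ : Representation ℝ G V) (σ : Representation ℝ G W) :
    affKer ρ ⊆ affKer σ ↔ ann ρ ⊓ ann (trivial ℝ G ℝ) ≤ ann σ := by
  rw [affKer_eq_preimage, affKer_eq_preimage, Equiv.preimage_subset, SetLike.coe_subset_coe,
    le_inf_iff, and_iff_left inf_le_right]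

theorem IsIrreducibleRep.isSummand_iff_annihilator_le {θ : Representation ℝ G W}
    (hθ : IsIrreducibleRep θ) (ρ : Representation ℝ G V) :
    IsSummand θ ρ ↔ ann ρ ≤ ann θ := by
  have := (isIrreducibleRep_iff_isSimpleModule θ).mp hθ
  rw [isSummand_iff_exists_retraction, IsSimpleModule.exists_retraction_iff_annihilator_le]

end Annihilator

section StablyEquivalent

variable {V₁ V₂ W : Type} [AddCommGroup V₁] [Module ℝ V₁] [AddCommGroup V₂] [Module ℝ V₂]
  [AddCommGroup W] [Module ℝ W] {ρ₁ : Representation ℝ G V₁} {ρ₂ : Representation ℝ G V₂}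

theorem StablyEquivalent.symm (h : StablyEquivalent ρ₁ ρ₂) : StablyEquivalent ρ₂ ρ₁ := by
  obtain ⟨V', _, _, ρ₁', W', _, _, ρ₂', h₁, h₂, hiso⟩ := h
  exact ⟨W', _, _, ρ₂', V', _, _, ρ₁', h₂, h₁, hiso.symm⟩

theorem StablyEquivalent.isSummand (h : StablyEquivalent ρ₁ ρ₂) {θ : Representation ℝ G W}
    (hθ : IsIrreducibleRep θ) (hnt : ∃ g : G, θ g ≠ LinearMap.id) (hs : IsSummand θ ρ₁) :
    IsSummand θ ρ₂ := by
  obtain ⟨V', _, _, ρ₁', W', _, _, ρ₂', -, h₂, hiso⟩ := h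
  have := (isIrreducibleRep_iff_isSimpleModule θ).mp hθ
  rw [hθ.isSummand_iff_annihilator_le] at hs ⊢
  have hle : ann ρ₂ ⊓ ann (trivial ℝ G ℝ) ≤ ann θ :=
    calc ann ρ₂ ⊓ ann (trivial ℝ G ℝ)
        ≤ ann ρ₂ ⊓ ann ρ₂' := le_inf inf_le_left ((affKer_subset_affKer_iff ρ₂ ρ₂').mp h₂)
      _ = ann (prodRep ρ₂ ρ₂') := (annihilator_asModule_prod ρ₂ ρ₂').symm
      _ = ann (prodRep ρ₁ ρ₁') := hiso.annihilator_eq.symm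
      _ ≤ ann ρ₁ := (annihilator_asModule_prod ρ₁ ρ₁').le.trans inf_le_left
      _ ≤ ann θ := hs
  obtain ⟨g, hg⟩ := hnt
  exact (IsSimpleModule.le_annihilator_or_le_annihilator_of_inf_le hle).resolve_right
    fun htriv => hg ((annihilator_trivial_le_iff θ).mp htriv g)

theorem affKer_subset_of_forall_isSummand
    (h : ∀ (W : Type) [AddCommGroup W] [Module ℝ W] (θ : Representation ℝ G W),
      IsIrreducibleRep θ → (∃ g : G, θ g ≠ LinearMap.id) → IsSummand θ ρ₂ → IsSummand θ ρ₁) :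
    affKer ρ₁ ⊆ affKer ρ₂ := by
  rw [affKer_subset_affKer_iff]
  refine IsSemisimpleModule.le_annihilator_of_forall_isSimpleModule fun S hS => ?_
  let θ := ofModule' (k := ℝ) (G := G) S
  let e := ofModule'AsModuleEquiv (k := ℝ) (G := G) S
  have hθ : IsIrreducibleRep θ := (isIrreducibleRep_iff_isSimpleModule θ).mpr (.congr e)
  rw [← e.annihilator_eq]
  by_cases htriv : ∀ g, θ g = LinearMap.id
  · exact inf_le_right.trans ((annihilator_trivial_le_iff θ).mpr htriv)
  · have hs : IsSummand θ ρ₂ := (hθ.isSummand_iff_annihilator_le ρ₂).mpr <|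
      e.annihilator_eq ▸ S.subtype.annihilator_le_of_injective S.injective_subtype
    exact inf_le_left.trans
      ((hθ.isSummand_iff_annihilator_le ρ₁).mp (h _ θ hθ (not_forall.mp htriv) hs))

end StablyEquivalent

theorem stablyEquivalent_iff_same_nontrivial_irreducible_factors_general
    {V₁ V₂ : Type} [AddCommGroup V₁] [Module ℝ V₁]
    [AddCommGroup V₂] [Module ℝ V₂]
    (ρ₁ : Representation ℝ G V₁) (ρ₂ : Representation ℝ G V₂) :
    StablyEquivalent ρ₁ ρ₂ ↔
      ∀ (W : Type) [AddCommGroup W] [Module ℝ W] (θ : Representation ℝ G W),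
        IsIrreducibleRep θ → (∃ g : G, θ g ≠ LinearMap.id) →
        (IsSummand θ ρ₁ ↔ IsSummand θ ρ₂) := by
  refine ⟨fun h W _ _ θ hθ hnt => ⟨h.isSummand hθ hnt, h.symm.isSummand hθ hnt⟩, fun h => ?_⟩
  exact ⟨V₂, _, _, ρ₂, V₁, _, _, ρ₁,
    affKer_subset_of_forall_isSummand fun W _ _ θ hθ hnt => (h W θ hθ hnt).mpr,
    affKer_subset_of_forall_isSummand fun W _ _ θ hθ hnt => (h W θ hθ hnt).mp,
    ⟨LinearEquiv.prodComm ℝ V₁ V₂, fun _ _ => rfl⟩⟩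

/-- Baumeister et al., Thm. 2.4. Two real representations of a finite
group `G` are stably equivalent if and only if they contain the same non-trivial
irreducible factors. -/
theorem stablyEquivalent_iff_same_nontrivial_irreducible_factors
    {V₁ V₂ : Type} [AddCommGroup V₁] [Module ℝ V₁] [FiniteDimensional ℝ V₁]
    [AddCommGroup V₂] [Module ℝ V₂] [FiniteDimensional ℝ V₂]
    (ρ₁ : Representation ℝ G V₁) (ρ₂ : Representation ℝ G V₂) :
    StablyEquivalent ρ₁ ρ₂ ↔
      ∀ (W : Type) [AddCommGroup W] [Module ℝ W] (θ : Representation ℝ G W),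
        IsIrreducibleRep θ → (∃ g : G, θ g ≠ LinearMap.id) →
        (IsSummand θ ρ₁ ↔ IsSummand θ ρ₂) :=
  stablyEquivalent_iff_same_nontrivial_irreducible_factors_general ρ₁ ρ₂
end

section
/- If (G₁, π₁) and (G₂, π₂) are effectively equivalent permutation groups, then the associated permutation polytopes P(π₁) and P(π₂) are affinely equivalent. -/
/- The affine dependencies among the points `Π(g)` of a permutation polytope are exactly the
affine kernel of `Π`, and stable equivalence preserves affine kernels (those of a direct sum
intersect, and the summands added are affine quotients). So the vertex families of the two
polytopes, indexed compatibly through `φ`, satisfy the same affine relations. Homogenizing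
`p ↦ (p, 1)` turns this into an equality of kernels of two linear maps out of `ℝ^G`; each then
factors through the other, and slicing the factor maps at height `1` gives mutually inverse
affine maps between the affine hulls carrying vertices to vertices. -/

open Finset

/-- The permutation matrix of `σ`: `(M_σ)_{ij} = 1` if `i = σ j` and `0` otherwise. -/
def permMat (n : ℕ) (σ : Equiv.Perm (Fin n)) : Matrix (Fin n) (Fin n) ℝ :=
  Matrix.of fun i j => if i = σ j then 1 else 0

lemma permMat_one (n : ℕ) : permMat n 1 = 1 := by
  ext i j; simp [permMat, Matrix.one_apply]; congr

lemma permMat_mul (n : ℕ) (σ τ : Equiv.Perm (Fin n)) :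
    permMat n (σ * τ) = permMat n σ * permMat n τ := by
  ext i j
  simp only [permMat, Matrix.mul_apply, Matrix.of_apply, Equiv.Perm.mul_apply]
  rw [Finset.sum_eq_single (τ j)]
  · simp; congr
  · intro k _ hk; simp [hk]
  · simp

/-- The matrix representation `Π : G → GL_n(ℝ)`, `g ↦ M_{π(g)}`, induced by a
permutation representation `π : G → Sym(n)`, viewed as acting on `ℝⁿ`. -/
noncomputable def permRep (n : ℕ) {G : Type} [Group G] (π : G →* Equiv.Perm (Fin n)) :
    Representation ℝ G (Fin n → ℝ) where
  toFun g := (permMat n (π g)).mulVecLin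
  map_one' := by simp [permMat_one]; rfl
  map_mul' g h := by simp [permMat_mul]; rfl

variable {G : Type} [Group G] [Fintype G]

/-- Two polytopes `P ⊆ E₁`, `Q ⊆ E₂` are affinely equivalent: there is an affine
isomorphism between their affine hulls mapping `P` onto `Q` (encoded by a pair of
affine maps of the ambient spaces which are mutually inverse on the affine hulls). -/
def AffinelyEquivalent {E₁ E₂ : Type} [AddCommGroup E₁] [Module ℝ E₁]
    [AddCommGroup E₂] [Module ℝ E₂] (P : Set E₁) (Q : Set E₂) : Prop :=
  ∃ (f : E₁ →ᵃ[ℝ] E₂) (g : E₂ →ᵃ[ℝ] E₁),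
    f '' P = Q ∧
    (∀ x ∈ affineSpan ℝ P, g (f x) = x) ∧
    (∀ y ∈ affineSpan ℝ Q, f (g y) = y)

namespace LinearMap

theorem exists_comp_eq_of_ker_le {K V W U : Type*} [DivisionRing K] [AddCommGroup V]
    [Module K V] [AddCommGroup W] [Module K W] [AddCommGroup U] [Module K U]
    (A : V →ₗ[K] W) (B : V →ₗ[K] U) (h : ker A ≤ ker B) : ∃ C : W →ₗ[K] U, C ∘ₗ A = B := by
  obtain ⟨C, hC⟩ := exists_extend ((ker A).liftQ B h ∘ₗ A.quotKerEquivRange.symm.toLinearMap)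
  refine ⟨C, ext fun v => ?_⟩
  simpa [quotKerEquivRange_symm_apply_image] using congr($hC ⟨A v, mem_range_self A v⟩)

end LinearMap

section AffineRelations

variable {K I E F : Type*} [Field K] [Fintype I] [AddCommGroup E] [Module K E]
  [AddCommGroup F] [Module K F]

variable (K) in
def affineRelations (p : I → E) : Submodule K (I → K) :=
  LinearMap.ker (Fintype.linearCombination K fun i => (p i, (1 : K)))

theorem mem_affineRelations {p : I → E} {l : I → K} :
    l ∈ affineRelations K p ↔ ∑ i, l i • p i = 0 ∧ ∑ i, l i = 0 := by
  simp [affineRelations, Fintype.linearCombination_apply, Prod.ext_iff, Prod.fst_sum,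
    Prod.snd_sum]

theorem affineRelations_comp_of_injective {Φ : Type*} [FunLike Φ E F] [LinearMapClass Φ K E F]
    {f : Φ} (hf : Function.Injective f) (p : I → E) :
    affineRelations K (f ∘ p) = affineRelations K p := by
  ext l
  simp only [mem_affineRelations, Function.comp_apply, ← map_smul, ← map_sum,
    map_eq_zero_iff f hf]

theorem affineRelations_prodMk (p : I → E) (q : I → F) :
    affineRelations K (fun i => (p i, q i)) = affineRelations K p ⊓ affineRelations K q := by
  ext l
  simp only [mem_affineRelations, Submodule.mem_inf, Prod.ext_iff, Prod.fst_sum, Prod.snd_sum,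
    Prod.smul_fst, Prod.smul_snd, Prod.fst_zero, Prod.snd_zero]
  tauto

theorem exists_affineMap_sum_smul_eq {p : I → E} {q : I → F}
    (h : affineRelations K p ≤ affineRelations K q) :
    ∃ f : E →ᵃ[K] F, ∀ l : I → K, ∑ i, l i = 1 → f (∑ i, l i • p i) = ∑ i, l i • q i := by
  obtain ⟨C, hC⟩ := LinearMap.exists_comp_eq_of_ker_le _ _ h
  -- `f x = (C (x, 1)).1`
  refine ⟨(LinearMap.fst K F K ∘ₗ C).toAffineMap.comp
    ((AffineMap.id K E).prod (AffineMap.const K E 1)), fun l hl => ?_⟩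
  have hlift : (∑ i, l i • p i, (1 : K)) = Fintype.linearCombination K (fun i => (p i, 1)) l := by
    simp [Fintype.linearCombination_apply, Prod.ext_iff, Prod.fst_sum, Prod.snd_sum, hl]
  show (C (∑ i, l i • p i, 1)).1 = _
  rw [hlift, ← LinearMap.comp_apply, hC, Fintype.linearCombination_apply, Prod.fst_sum]
  rfl

theorem leftInvOn_affineSpan_range {p : I → E} {q : I → F} {f : E →ᵃ[K] F} {g : F →ᵃ[K] E}
    (hf : ∀ l : I → K, ∑ i, l i = 1 → f (∑ i, l i • p i) = ∑ i, l i • q i)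
    (hg : ∀ l : I → K, ∑ i, l i = 1 → g (∑ i, l i • q i) = ∑ i, l i • p i) :
    ∀ x ∈ affineSpan K (Set.range p), g (f x) = x := by
  intro x hx
  obtain ⟨l, hl, rfl⟩ := eq_affineCombination_of_mem_affineSpan_of_fintype hx
  rw [univ.affineCombination_eq_linear_combination p l hl, hf l hl, hg l hl]

theorem exists_affineMap_comp_eq_of_affineRelations_eq {p : I → E} {q : I → F}
    (h : affineRelations K p = affineRelations K q) :
    ∃ (f : E →ᵃ[K] F) (g : F →ᵃ[K] E), f ∘ p = q ∧
      (∀ x ∈ affineSpan K (Set.range p), g (f x) = x) ∧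
      (∀ y ∈ affineSpan K (Set.range q), f (g y) = y) := by
  classical
  obtain ⟨f, hf⟩ := exists_affineMap_sum_smul_eq h.le
  obtain ⟨g, hg⟩ := exists_affineMap_sum_smul_eq h.ge
  refine ⟨f, g, funext fun i => ?_, leftInvOn_affineSpan_range hf hg,
    leftInvOn_affineSpan_range hg hf⟩
  simpa [Pi.single_apply] using hf (Pi.single i 1) (by simp)

end AffineRelations

theorem affinelyEquivalent_convexHull_of_affineRelations_eq {I E F : Type} [Fintype I]
    [AddCommGroup E] [Module ℝ E] [AddCommGroup F] [Module ℝ F] {p : I → E} {q : I → F}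
    (h : affineRelations ℝ p = affineRelations ℝ q) :
    AffinelyEquivalent (convexHull ℝ (Set.range p)) (convexHull ℝ (Set.range q)) := by
  obtain ⟨f, g, hfp, hgf, hfg⟩ := exists_affineMap_comp_eq_of_affineRelations_eq h
  refine ⟨f, g, ?_, ?_, ?_⟩
  · rw [f.image_convexHull, ← Set.range_comp, hfp]
  · rwa [affineSpan_convexHull]
  · rwa [affineSpan_convexHull]

section Representation

variable {V W : Type} [AddCommGroup V] [Module ℝ V] [AddCommGroup W] [Module ℝ W]

theorem affKer_eq_affineRelations (ρ : Representation ℝ G V) :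
    affKer ρ = affineRelations ℝ ⇑ρ := by
  ext l
  exact mem_affineRelations.symm

theorem affKer_prodRep (ρ : Representation ℝ G V) (σ : Representation ℝ G W) :
    affKer (prodRep ρ σ) = affKer ρ ∩ affKer σ := by
  have hinj : Function.Injective (LinearMap.prodMapLinear ℝ V W V W ℝ) := by
    rintro ⟨A, B⟩ ⟨A', B'⟩ h
    refine Prod.ext (LinearMap.ext fun v => ?_) (LinearMap.ext fun w => ?_)
    · exact congr(($h (v, 0)).1)
    · exact congr(($h (0, w)).2)
  rw [affKer_eq_affineRelations, affKer_eq_affineRelations, affKer_eq_affineRelations,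
    ← Submodule.coe_inf, ← affineRelations_prodMk, ← affineRelations_comp_of_injective hinj]
  rfl

theorem affKer_eq_of_repIso {ρ : Representation ℝ G V} {σ : Representation ℝ G W}
    (h : RepIso ρ σ) : affKer ρ = affKer σ := by
  obtain ⟨e, he⟩ := h
  have hσ : ⇑σ = e.conj ∘ ⇑ρ := funext fun g => LinearMap.ext fun w => by
    simp [LinearEquiv.conj_apply, he]
  rw [affKer_eq_affineRelations, affKer_eq_affineRelations, hσ,
    affineRelations_comp_of_injective e.conj.injective]

theorem StablyEquivalent.affKer_eq {ρ₁ : Representation ℝ G V} {ρ₂ : Representation ℝ G W}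
    (h : StablyEquivalent ρ₁ ρ₂) : affKer ρ₁ = affKer ρ₂ := by
  obtain ⟨V', _, _, ρ₁', W', _, _, ρ₂', h₁, h₂, hiso⟩ := h
  calc affKer ρ₁ = affKer ρ₁ ∩ affKer ρ₁' := (Set.inter_eq_left.mpr h₁).symm
    _ = affKer ρ₂ ∩ affKer ρ₂' := by
      rw [← affKer_prodRep, ← affKer_prodRep, affKer_eq_of_repIso hiso]
    _ = affKer ρ₂ := Set.inter_eq_left.mpr h₂

end Representation

theorem affKer_permRep {n : ℕ} (π : G →* Equiv.Perm (Fin n)) :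
    affKer (permRep n π) = affineRelations ℝ fun g => permMat n (π g) := by
  have hrep : ⇑(permRep n π) = Matrix.toLin' ∘ fun g => permMat n (π g) :=
    funext fun g => (Matrix.toLin'_apply' _).symm
  rw [affKer_eq_affineRelations, hrep, affineRelations_comp_of_injective Matrix.toLin'.injective]

theorem effectivelyEquivalent_implies_affinelyEquivalent_general
    {G₁ G₂ : Type} [Group G₁] [Fintype G₁] [Group G₂] [Fintype G₂]
    {n₁ n₂ : ℕ} (π₁ : G₁ →* Equiv.Perm (Fin n₁)) (π₂ : G₂ →* Equiv.Perm (Fin n₂))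
    (heff : ∃ φ : G₁ ≃* G₂,
      StablyEquivalent (permRep n₁ π₁) ((permRep n₂ π₂).comp φ.toMonoidHom)) :
    AffinelyEquivalent
      (convexHull ℝ (Set.range fun g : G₁ => permMat n₁ (π₁ g)))
      (convexHull ℝ (Set.range fun g : G₂ => permMat n₂ (π₂ g))) := by
  obtain ⟨φ, hφ⟩ := heff
  have hrel : affineRelations ℝ (fun g => permMat n₁ (π₁ g)) =
      affineRelations ℝ (fun g => permMat n₂ (π₂ (φ g))) := by
    apply SetLike.coe_injective
    rw [← affKer_permRep π₁, hφ.affKer_eq]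
    exact affKer_permRep (π₂.comp φ.toMonoidHom)
  rw [← φ.surjective.range_comp]
  exact affinelyEquivalent_convexHull_of_affineRelations_eq hrel

/-- If `(G₁, π₁)` and `(G₂, π₂)` are effectively equivalent permutation
groups, then the associated permutation polytopes `P(π₁)` and `P(π₂)` are affinely
equivalent. -/
theorem effectivelyEquivalent_implies_affinelyEquivalent
    {G₁ G₂ : Type} [Group G₁] [Fintype G₁] [Group G₂] [Fintype G₂]
    {n₁ n₂ : ℕ} (π₁ : G₁ →* Equiv.Perm (Fin n₁)) (π₂ : G₂ →* Equiv.Perm (Fin n₂))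
    (hπ₁ : Function.Injective π₁) (hπ₂ : Function.Injective π₂)
    (heff : ∃ φ : G₁ ≃* G₂,
      StablyEquivalent (permRep n₁ π₁) ((permRep n₂ π₂).comp φ.toMonoidHom)) :
    AffinelyEquivalent
      (convexHull ℝ (Set.range fun g : G₁ => permMat n₁ (π₁ g)))
      (convexHull ℝ (Set.range fun g : G₂ => permMat n₂ (π₂ g))) :=
  effectivelyEquivalent_implies_affinelyEquivalent_general π₁ π₂ heff
end

section
/- Let (G, π₁) and (G, π₂) be permutation groups on the same finite group G, with induced matrix representations Π₁, Π₂ and subspaces U_{Π_i} := { Σ_{g∈G} λ_g M_{π_i(g)} : Σ_g λ_g = 0 } regarded as G-modules via h · M := M_{π_i(h)} M. If there is a group automorphism φ of G and an ℝ-linear isomorphism Φ : U_{Π₁} → U_{Π₂} satisfying Φ(g · u) = φ(g) · Φ(u) for all u ∈ U_{Π₁} and all g ∈ G, then (G, π₁) and (G, π₂) are effectively equivalent. -/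
open Finset

/-- The linear map sending a family `(λ_g)` to `∑_g λ_g M_{π(g)}`. -/
noncomputable def combo (n : ℕ) {G : Type} [Group G] [Fintype G]
    (π : G →* Equiv.Perm (Fin n)) : (G → ℝ) →ₗ[ℝ] Matrix (Fin n) (Fin n) ℝ where
  toFun l := ∑ g : G, l g • permMat n (π g)
  map_add' x y := by simp [add_smul, Finset.sum_add_distrib]
  map_smul' c x := by simp [smul_smul, Finset.smul_sum]

/-- The linear functional `(λ_g) ↦ ∑_g λ_g`. -/
noncomputable def coordSum (G : Type) [Fintype G] : (G → ℝ) →ₗ[ℝ] ℝ where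
  toFun l := ∑ g : G, l g
  map_add' x y := by simp [Finset.sum_add_distrib]
  map_smul' c x := by simp [Finset.mul_sum]

/-- `U_Π = { ∑ λ_g M_{π(g)} : ∑ λ_g = 0 }`. -/
noncomputable def Usub (n : ℕ) {G : Type} [Group G] [Fintype G]
    (π : G →* Equiv.Perm (Fin n)) : Submodule ℝ (Matrix (Fin n) (Fin n) ℝ) :=
  (LinearMap.ker (coordSum G)).map (combo n π)

variable {G : Type} [Group G] [Fintype G]

/-!
For `λ` with `∑ λ_g = 0`, the matrix `A = ∑ λ_g M_{π(g)}` vanishes as soon as it kills `U_Π` from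
the left: `U_Π` contains every `M_{π(h)} - 1`, so `A` is right invariant, and then
`A · ∑_h M_{π(h)}` equals both `|G| • A` and `(∑ λ_g) • ∑_h M_{π(h)} = 0`. An isomorphism
`Φ : U_{Π₁} ≃ U_{Π₂}` twisted by `φ` turns left multiplication by `∑ λ_g M_{π₁(g)}` into left
multiplication by `∑ λ_g M_{π₂(φ g)}`, so `Π₁` and `Π₂ ∘ φ` have the same affine kernel. Then each
is an affine quotient of the other, and `Π₁ ⊕ Π₂ ∘ φ ≅ Π₂ ∘ φ ⊕ Π₁`.
-/

theorem stablyEquivalent_of_affKer_eq {V W : Type} [AddCommGroup V] [Module ℝ V]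
    [AddCommGroup W] [Module ℝ W] {ρ : Representation ℝ G V} {σ : Representation ℝ G W}
    (h : affKer ρ = affKer σ) : StablyEquivalent ρ σ :=
  ⟨W, _, _, σ, V, _, _, ρ, h.le, h.ge, LinearEquiv.prodComm ℝ V W, fun _ _ => rfl⟩

section Algebra

variable {R : Type*} [Ring R] [Algebra ℝ R]

theorem sum_smul_eq_zero_of_mul_eq_self (ρ : G →* R) {l : G → ℝ} (hl : ∑ g, l g = 0)
    (hinv : ∀ h, (∑ g, l g • ρ g) * ρ h = ∑ g, l g • ρ g) :
    ∑ g, l g • ρ g = 0 := by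
  set A := ∑ g, l g • ρ g
  have hS : ∀ g, ρ g * ∑ h, ρ h = ∑ h, ρ h := fun g => by
    simpa [Finset.mul_sum, ← map_mul] using Equiv.sum_comp (Equiv.mulLeft g) (fun h => ρ h)
  have hcard : A * ∑ h, ρ h = (Fintype.card G : ℝ) • A := by
    simp [Finset.mul_sum, hinv, Nat.cast_smul_eq_nsmul]
  have hzero : A * ∑ h, ρ h = 0 := by
    simp [A, Finset.sum_mul, hS, ← Finset.sum_smul, hl]
  simpa [Fintype.card_ne_zero] using hcard.symm.trans hzero

theorem sum_smul_eq_zero_iff_forall_mul_eq_zero (ρ : G →* R) {U : Submodule ℝ R}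
    (hU : ∀ h, ρ h - 1 ∈ U) {l : G → ℝ} (hl : ∑ g, l g = 0) :
    ∑ g, l g • ρ g = 0 ↔ ∀ u ∈ U, (∑ g, l g • ρ g) * u = 0 := by
  refine ⟨fun hA u _ => by rw [hA, zero_mul], fun hA => ?_⟩
  refine sum_smul_eq_zero_of_mul_eq_self ρ hl fun h => ?_
  simpa [mul_sub, sub_eq_zero] using hA _ (hU h)

variable {ι R' : Type*} [Fintype ι] [Ring R'] [Algebra ℝ R']
  {U : Submodule ℝ R} {U' : Submodule ℝ R'} {a : ι → R} {b : ι → R'}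

theorem sum_smul_mul_mem (ha : ∀ i, ∀ u ∈ U, a i * u ∈ U) (l : ι → ℝ) {u : R} (hu : u ∈ U) :
    (∑ i, l i • a i) * u ∈ U := by
  rw [Finset.sum_mul]
  exact U.sum_mem fun i _ => by rw [smul_mul_assoc]; exact U.smul_mem _ (ha i u hu)

theorem coe_apply_eq_sum_smul_mul (Φ : U →ₗ[ℝ] U')
    (hΦ : ∀ i (u v : U), (v : R) = a i * u → (Φ v : R') = b i * Φ u)
    (ha : ∀ i, ∀ u ∈ U, a i * u ∈ U) (l : ι → ℝ) {u v : U} (hv : (v : R) = (∑ i, l i • a i) * u) :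
    (Φ v : R') = (∑ i, l i • b i) * Φ u := by
  have hsum : v = ∑ i, l i • (⟨a i * u, ha i u u.2⟩ : U) :=
    Subtype.ext (by simp [hv, Finset.sum_mul])
  have hterm : ∀ i, (Φ ⟨a i * u, ha i u u.2⟩ : R') = b i * Φ u := fun i => hΦ i u _ rfl
  simp only [hsum, map_sum, map_smul, Submodule.coe_sum, Submodule.coe_smul, hterm,
    Finset.sum_mul, smul_mul_assoc]

theorem forall_mul_eq_zero_iff_of_linearEquiv (Φ : U ≃ₗ[ℝ] U')
    (hΦ : ∀ i (u v : U), (v : R) = a i * u → (Φ v : R') = b i * Φ u)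
    (ha : ∀ i, ∀ u ∈ U, a i * u ∈ U) (l : ι → ℝ) :
    (∀ u ∈ U, (∑ i, l i • a i) * u = 0) ↔ ∀ w ∈ U', (∑ i, l i • b i) * w = 0 := by
  have hiff : ∀ u : U, (∑ i, l i • a i) * u = 0 ↔ (∑ i, l i • b i) * Φ u = 0 := fun u => by
    let v : U := ⟨_, sum_smul_mul_mem ha l u.2⟩
    have hv : (Φ v : R') = (∑ i, l i • b i) * Φ u :=
      coe_apply_eq_sum_smul_mul Φ.toLinearMap hΦ ha l rfl
    rw [← hv]
    simp [v]
  constructor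
  · intro h w hw
    obtain ⟨u, hu⟩ := Φ.surjective ⟨w, hw⟩
    simpa [hu] using (hiff u).1 (h u u.2)
  · exact fun h u hu => (hiff ⟨u, hu⟩).2 (h _ (Φ _).2)

end Algebra

def permMatHom (n : ℕ) : Equiv.Perm (Fin n) →* Matrix (Fin n) (Fin n) ℝ where
  toFun := permMat n
  map_one' := permMat_one n
  map_mul' := permMat_mul n

section Usub

variable {n : ℕ} (π : G →* Equiv.Perm (Fin n))

theorem mem_Usub_iff {u : Matrix (Fin n) (Fin n) ℝ} :
    u ∈ Usub n π ↔ ∃ l : G → ℝ, ∑ g, l g = 0 ∧ ∑ g, l g • permMat n (π g) = u :=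
  Iff.rfl

theorem permMat_sub_one_mem_Usub (h : G) : permMat n (π h) - 1 ∈ Usub n π := by
  classical
  refine (mem_Usub_iff π).2 ⟨Pi.single h 1 - Pi.single 1 1, by simp [Finset.sum_sub_distrib], ?_⟩
  simp [sub_smul, Finset.sum_sub_distrib, permMat_one]

theorem permMat_mul_mem_Usub (g : G) {u : Matrix (Fin n) (Fin n) ℝ} (hu : u ∈ Usub n π) :
    permMat n (π g) * u ∈ Usub n π := by
  obtain ⟨l, hl, rfl⟩ := (mem_Usub_iff π).1 hu
  refine (mem_Usub_iff π).2 ⟨fun h => l (g⁻¹ * h), ?_, ?_⟩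
  · exact (Equiv.sum_comp (Equiv.mulLeft g⁻¹) l).trans hl
  · rw [Finset.mul_sum, ← Equiv.sum_comp (Equiv.mulLeft g)]
    simp [permMat_mul]

theorem mem_affKer_permRep_iff {l : G → ℝ} :
    l ∈ affKer (permRep n π) ↔ ∑ g, l g • permMat n (π g) = 0 ∧ ∑ g, l g = 0 := by
  have hsum : ∑ g, l g • (permRep n π g : (Fin n → ℝ) →ₗ[ℝ] Fin n → ℝ) =
      Matrix.toLin' (∑ g, l g • permMat n (π g)) := by
    simp [permRep, Matrix.toLin'_apply']
  rw [affKer, Set.mem_ofPred_eq, hsum, LinearEquiv.map_eq_zero_iff]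

end Usub

theorem equivariant_iso_on_U_implies_effectivelyEquivalent_general
    {n₁ n₂ : ℕ} (π₁ : G →* Equiv.Perm (Fin n₁)) (π₂ : G →* Equiv.Perm (Fin n₂))
    (h : ∃ (φ : G ≃* G) (Φ : ↥(Usub n₁ π₁) ≃ₗ[ℝ] ↥(Usub n₂ π₂)),
      ∀ (g : G) (u v : ↥(Usub n₁ π₁)),
        (v : Matrix (Fin n₁) (Fin n₁) ℝ) = permMat n₁ (π₁ g) * (u : Matrix (Fin n₁) (Fin n₁) ℝ) →
        (Φ v : Matrix (Fin n₂) (Fin n₂) ℝ) =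
          permMat n₂ (π₂ (φ g)) * (Φ u : Matrix (Fin n₂) (Fin n₂) ℝ)) :
    ∃ φ : G ≃* G,
      StablyEquivalent (permRep n₁ π₁) ((permRep n₂ π₂).comp φ.toMonoidHom) := by
  obtain ⟨φ, Φ, hΦ⟩ := h
  refine ⟨φ, stablyEquivalent_of_affKer_eq (Set.ext fun l => ?_)⟩
  refine (mem_affKer_permRep_iff π₁).trans
    (Iff.trans ?_ (mem_affKer_permRep_iff (π₂.comp φ.toMonoidHom)).symm)
  refine and_congr_left fun hl => ?_
  calc ∑ g, l g • permMat n₁ (π₁ g) = 0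
        ↔ ∀ u ∈ Usub n₁ π₁, (∑ g, l g • permMat n₁ (π₁ g)) * u = 0 :=
          sum_smul_eq_zero_iff_forall_mul_eq_zero ((permMatHom n₁).comp π₁)
            (permMat_sub_one_mem_Usub π₁) hl
    _ ↔ ∀ w ∈ Usub n₂ π₂, (∑ g, l g • permMat n₂ (π₂ (φ g))) * w = 0 :=
          forall_mul_eq_zero_iff_of_linearEquiv Φ hΦ (fun g _ => permMat_mul_mem_Usub π₁ g) l
    _ ↔ ∑ g, l g • permMat n₂ (π₂ (φ g)) = 0 :=
          (sum_smul_eq_zero_iff_forall_mul_eq_zero ((permMatHom n₂).comp (π₂.comp φ.toMonoidHom))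
            (fun h => permMat_sub_one_mem_Usub π₂ (φ h)) hl).symm

/-- (b) ⇒ (a) of the characterization theorem. If there is a group
automorphism `φ` of `G` and an `ℝ`-linear isomorphism `Φ : U_{Π₁} → U_{Π₂}` with
`Φ(g·u) = φ(g)·Φ(u)` (where `g·M = M_{πᵢ(g)} M`), then `(G, π₁)` and `(G, π₂)` are
effectively equivalent. -/
theorem equivariant_iso_on_U_implies_effectivelyEquivalent
    {n₁ n₂ : ℕ} (π₁ : G →* Equiv.Perm (Fin n₁)) (π₂ : G →* Equiv.Perm (Fin n₂))
    (hπ₁ : Function.Injective π₁) (hπ₂ : Function.Injective π₂)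
    (h : ∃ (φ : G ≃* G) (Φ : ↥(Usub n₁ π₁) ≃ₗ[ℝ] ↥(Usub n₂ π₂)),
      ∀ (g : G) (u v : ↥(Usub n₁ π₁)),
        (v : Matrix (Fin n₁) (Fin n₁) ℝ) = permMat n₁ (π₁ g) * (u : Matrix (Fin n₁) (Fin n₁) ℝ) →
        (Φ v : Matrix (Fin n₂) (Fin n₂) ℝ) =
          permMat n₂ (π₂ (φ g)) * (Φ u : Matrix (Fin n₂) (Fin n₂) ℝ)) :
    ∃ φ : G ≃* G,
      StablyEquivalent (permRep n₁ π₁) ((permRep n₂ π₂).comp φ.toMonoidHom) :=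
  equivariant_iso_on_U_implies_effectivelyEquivalent_general π₁ π₂ h
end

section
/- Let G = ⟨(12),(34)⟩ ≤ Sym(4) (a Klein four-group) and let π₂ : G → Sym(6) be the injective homomorphism determined by (12) ↦ (12)(34) and (34) ↦ (12)(56). Then the matrix (1/2)·[M_{π₂((12))} + M_{π₂((34))} + M_{π₂((12)(34))} − M_{id}] lies in aff(P(Π₂)) ∩ Mat₆(ℤ) but is not a ℤ-linear combination of the matrices in Π₂(G); in particular, the vertices of P(Π₂) do not form a lattice basis of the lattice aff(P(Π₂)) ∩ Mat₆(ℤ). -/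
open Finset
open scoped Classical

/-- The Klein four-group `G = ⟨(12), (34)⟩ ≤ Sym(4)` (points numbered `0,…,3`). -/
def KG : Subgroup (Equiv.Perm (Fin 4)) :=
  Subgroup.closure {Equiv.swap 0 1, Equiv.swap 2 3}

lemma mem_KG (g : Equiv.Perm (Fin 4)) (hg : g ∈ KG) :
    g = 1 ∨ g = Equiv.swap 0 1 ∨ g = Equiv.swap 2 3 ∨ g = Equiv.swap 0 1 * Equiv.swap 2 3 := by
  induction hg using Subgroup.closure_induction with
  | mem x hx => rcases hx with h | h <;> subst h <;> tauto
  | one => tauto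
  | mul x y hx hy ihx ihy =>
      rcases ihx with h|h|h|h <;> rcases ihy with h'|h'|h'|h' <;> subst h h' <;> simp_all <;> decide
  | inv x hx ihx => rcases ihx with h|h|h|h <;> subst h <;> decide

/-- For the embedding `π₂ : G → Sym(6)` with `(12) ↦ (12)(34)` and
`(34) ↦ (12)(56)` (points numbered `0,…,5`), the matrix
`½[M_{π₂((12))} + M_{π₂((34))} + M_{π₂((12)(34))} − M_{id}]` lies in
`aff(P(Π₂)) ∩ Mat₆(ℤ)` but is not a `ℤ`-linear combination of the matrices in
`Π₂(G)`; in particular the vertices of `P(Π₂)` do not form a lattice basis of the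
lattice `aff(P(Π₂)) ∩ Mat₆(ℤ)`. -/
theorem klein_group_vertices_not_lattice_basis
    (ha : Equiv.swap 0 1 ∈ KG) (hb : Equiv.swap 2 3 ∈ KG)
    (π₂ : ↥KG →* Equiv.Perm (Fin 6))
    (hπa : π₂ ⟨Equiv.swap 0 1, ha⟩ = Equiv.swap 0 1 * Equiv.swap 2 3)
    (hπb : π₂ ⟨Equiv.swap 2 3, hb⟩ = Equiv.swap 0 1 * Equiv.swap 4 5)
    (hπinj : Function.Injective π₂) :
    ∀ X : Matrix (Fin 6) (Fin 6) ℝ,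
      X = (1 / 2 : ℝ) •
        (permMat 6 (π₂ ⟨Equiv.swap 0 1, ha⟩) + permMat 6 (π₂ ⟨Equiv.swap 2 3, hb⟩)
          + permMat 6 (π₂ (⟨Equiv.swap 0 1, ha⟩ * ⟨Equiv.swap 2 3, hb⟩))
          - permMat 6 (π₂ 1)) →
      (X ∈ affineSpan ℝ (convexHull ℝ (Set.range fun g : ↥KG => permMat 6 (π₂ g)))) ∧
      (∀ i j : Fin 6, ∃ z : ℤ, X i j = (z : ℝ)) ∧
      (¬ ∃ c : ↥KG → ℤ,
        X = ∑ g : ↥KG, (c g : ℝ) • permMat 6 (π₂ g)) ∧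
      (¬ ∀ Y : Matrix (Fin 6) (Fin 6) ℝ,
        Y ∈ affineSpan ℝ (convexHull ℝ (Set.range fun g : ↥KG => permMat 6 (π₂ g))) →
        (∀ i j : Fin 6, ∃ z : ℤ, Y i j = (z : ℝ)) →
        ∃ c : ↥KG → ℤ, (∑ g : ↥KG, c g) = 1 ∧
          Y = ∑ g : ↥KG, (c g : ℝ) • permMat 6 (π₂ g)) := by
  intro X hX
  -- the four elements of KG
  set e : ↥KG := 1 with he
  set g1 : ↥KG := ⟨Equiv.swap 0 1, ha⟩ with hg1
  set g2 : ↥KG := ⟨Equiv.swap 2 3, hb⟩ with hg2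
  set g3 : ↥KG := g1 * g2 with hg3
  have hπ3 : π₂ g3 = (Equiv.swap 0 1 * Equiv.swap 2 3) * (Equiv.swap 0 1 * Equiv.swap 4 5) := by
    rw [hg3, map_mul, hπa, hπb]
  have hπe : π₂ e = 1 := map_one π₂
  -- distinctness
  have d12 : g1 ≠ g2 := by
    intro h; rw [Subtype.ext_iff] at h
    have h' : (Equiv.swap 0 1 : Equiv.Perm (Fin 4)) = Equiv.swap 2 3 := h
    exact absurd h' (by decide)
  have d13 : g1 ≠ g3 := by
    intro h; rw [Subtype.ext_iff] at h
    have h' : (Equiv.swap 0 1 : Equiv.Perm (Fin 4)) = Equiv.swap 0 1 * Equiv.swap 2 3 := h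
    exact absurd h' (by decide)
  have d23 : g2 ≠ g3 := by
    intro h; rw [Subtype.ext_iff] at h
    have h' : (Equiv.swap 2 3 : Equiv.Perm (Fin 4)) = Equiv.swap 0 1 * Equiv.swap 2 3 := h
    exact absurd h' (by decide)
  have de1 : e ≠ g1 := by
    intro h; rw [Subtype.ext_iff] at h
    have h' : (1 : Equiv.Perm (Fin 4)) = Equiv.swap 0 1 := h
    exact absurd h' (by decide)
  have de2 : e ≠ g2 := by
    intro h; rw [Subtype.ext_iff] at h
    have h' : (1 : Equiv.Perm (Fin 4)) = Equiv.swap 2 3 := h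
    exact absurd h' (by decide)
  have de3 : e ≠ g3 := by
    intro h; rw [Subtype.ext_iff] at h
    have h' : (1 : Equiv.Perm (Fin 4)) = Equiv.swap 0 1 * Equiv.swap 2 3 := h
    exact absurd h' (by decide)
  have huniv : (Finset.univ : Finset ↥KG) = {e, g1, g2, g3} := by
    apply Finset.Subset.antisymm _ (Finset.subset_univ _)
    intro g _
    rcases mem_KG g.1 g.2 with h|h|h|h <;>
      simp only [Finset.mem_insert, Finset.mem_singleton, Subtype.ext_iff, h, hg3, hg1, hg2] <;>
      tauto
  have hsum : ∀ (f : ↥KG → Matrix (Fin 6) (Fin 6) ℝ),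
      ∑ g : ↥KG, f g = f e + f g1 + f g2 + f g3 := by
    intro f
    rw [huniv, Finset.sum_insert (by simp [de1, de2, de3]),
      Finset.sum_insert (by simp [d12, d13]), Finset.sum_insert (by simp [d23]),
      Finset.sum_singleton]
    abel
  have hsumZ : ∀ (f : ↥KG → ℤ), ∑ g : ↥KG, f g = f e + f g1 + f g2 + f g3 := by
    intro f
    rw [huniv, Finset.sum_insert (by simp [de1, de2, de3]),
      Finset.sum_insert (by simp [d12, d13]), Finset.sum_insert (by simp [d23]),
      Finset.sum_singleton]
    ring
  -- membership in the affine span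
  have hmem : ∀ g : ↥KG, permMat 6 (π₂ g) ∈
      affineSpan ℝ (convexHull ℝ (Set.range fun g : ↥KG => permMat 6 (π₂ g))) := by
    intro g
    exact subset_affineSpan ℝ _ (subset_convexHull ℝ _ ⟨g, rfl⟩)
  have part1 : X ∈ affineSpan ℝ (convexHull ℝ (Set.range fun g : ↥KG => permMat 6 (π₂ g))) := by
    have h1 := AffineSubspace.smul_vsub_vadd_mem _ (1/2 : ℝ) (hmem g1) (hmem e) (hmem e)
    have h2 := AffineSubspace.smul_vsub_vadd_mem _ (1/2 : ℝ) (hmem g2) (hmem e) h1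
    have h3 := AffineSubspace.smul_vsub_vadd_mem _ (1/2 : ℝ) (hmem g3) (hmem e) h2
    convert h3 using 1
    rw [hX]
    simp only [vsub_eq_sub, vadd_eq_add]
    module
  -- entry computations
  have hval : ∀ i j : Fin 6, X i j = 0 ∨ X i j = 1 := by
    intro i j
    rw [hX]
    simp only [Matrix.smul_apply, Matrix.sub_apply, Matrix.add_apply, hπa, hπb, hπ3, hπe,
      permMat, Matrix.of_apply, smul_eq_mul]
    fin_cases i <;> fin_cases j <;> simp (config := { decide := true }) [Equiv.Perm.mul_apply, Equiv.swap_apply_def] <;> norm_num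
  have part2 : ∀ i j : Fin 6, ∃ z : ℤ, X i j = (z : ℝ) := by
    intro i j
    rcases hval i j with h | h
    · exact ⟨0, by simp [h]⟩
    · exact ⟨1, by simp [h]⟩
  have part3 : ¬ ∃ c : ↥KG → ℤ, X = ∑ g : ↥KG, (c g : ℝ) • permMat 6 (π₂ g) := by
    rintro ⟨c, hc⟩
    rw [hsum] at hc
    have entry : ∀ i j : Fin 6, X i j =
        (c e : ℝ) * (if i = (π₂ e) j then 1 else 0)
        + (c g1 : ℝ) * (if i = (π₂ g1) j then 1 else 0)
        + (c g2 : ℝ) * (if i = (π₂ g2) j then 1 else 0)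
        + (c g3 : ℝ) * (if i = (π₂ g3) j then 1 else 0) := by
      intro i j
      rw [hc]
      simp [permMat, Matrix.add_apply, Matrix.smul_apply, smul_eq_mul]
    have E1 : X 0 1 = (c g1 : ℝ) + (c g2 : ℝ) := by
      have := entry 0 1
      rw [hπa, hπb, hπ3, hπe] at this
      simp (config := { decide := true }) [Equiv.Perm.mul_apply, Equiv.swap_apply_def] at this
      linarith [this]
    have E2 : X 2 3 = (c g1 : ℝ) + (c g3 : ℝ) := by
      have := entry 2 3
      rw [hπa, hπb, hπ3, hπe] at this
      simp (config := { decide := true }) [Equiv.Perm.mul_apply, Equiv.swap_apply_def] at this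
      linarith [this]
    have E3 : X 4 5 = (c g2 : ℝ) + (c g3 : ℝ) := by
      have := entry 4 5
      rw [hπa, hπb, hπ3, hπe] at this
      simp (config := { decide := true }) [Equiv.Perm.mul_apply, Equiv.swap_apply_def] at this
      linarith [this]
    -- compute X 0 1 = 1 etc.
    have V1 : X 0 1 = 1 := by
      rw [hX]
      simp only [Matrix.smul_apply, Matrix.sub_apply, Matrix.add_apply, hπa, hπb, hπ3, hπe,
        permMat, Matrix.of_apply, smul_eq_mul]
      simp (config := { decide := true }) [Equiv.Perm.mul_apply, Equiv.swap_apply_def]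
      norm_num
    have V2 : X 2 3 = 1 := by
      rw [hX]
      simp only [Matrix.smul_apply, Matrix.sub_apply, Matrix.add_apply, hπa, hπb, hπ3, hπe,
        permMat, Matrix.of_apply, smul_eq_mul]
      simp (config := { decide := true }) [Equiv.Perm.mul_apply, Equiv.swap_apply_def]
      norm_num
    have V3 : X 4 5 = 1 := by
      rw [hX]
      simp only [Matrix.smul_apply, Matrix.sub_apply, Matrix.add_apply, hπa, hπb, hπ3, hπe,
        permMat, Matrix.of_apply, smul_eq_mul]
      simp (config := { decide := true }) [Equiv.Perm.mul_apply, Equiv.swap_apply_def]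
      norm_num
    have Z1 : c g1 + c g2 = 1 := by exact_mod_cast V1 ▸ E1.symm
    have Z2 : c g1 + c g3 = 1 := by exact_mod_cast V2 ▸ E2.symm
    have Z3 : c g2 + c g3 = 1 := by exact_mod_cast V3 ▸ E3.symm
    omega
  refine ⟨part1, part2, part3, ?_⟩
  intro hall
  obtain ⟨c, _, hc⟩ := hall X part1 part2
  exact part3 ⟨c, hc⟩
end
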